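/- Let q > 2 and let Y be a positive definite n×n complex matrix. Then Tr(Y) equals the infimum over positive definite matrices X of Tr(X) - Tr(X^{2-q}(log_q X - log_q Y)), and this infimum is attained at X = Y. -/

import Mathlib

open Matrix ComplexOrder

variable {n : ℕ}

/-- Apply a real function to a matrix via the spectral decomposition (functional calculus).
Returns `0` if the matrix is not Hermitian. -/
noncomputable def matFun (f : ℝ → ℝ) (A : Matrix (Fin n) (Fin n) ℂ) :
    Matrix (Fin n) (Fin n) ℂ :=
  if hA : A.IsHermitian then
    (hA.eigenvectorUnitary : Matrix (Fin n) (Fin n) ℂ) *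
      Matrix.diagonal (fun i => (f (hA.eigenvalues i) : ℂ)) *
      (star hA.eigenvectorUnitary : Matrix (Fin n) (Fin n) ℂ)
  else 0

/-- Matrix power `A^r` by functional calculus. -/
noncomputable def mpow (A : Matrix (Fin n) (Fin n) ℂ) (r : ℝ) : Matrix (Fin n) (Fin n) ℂ :=
  matFun (fun t => t ^ r) A

/-- Deformed matrix logarithm `log_q`. -/
noncomputable def mlogq (q : ℝ) (A : Matrix (Fin n) (Fin n) ℂ) : Matrix (Fin n) (Fin n) ℂ :=
  matFun (fun t => if q = 1 then Real.log t else (t ^ (q - 1) - 1) / (q - 1)) A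

/-- Deformed matrix exponential `exp_q`. -/
noncomputable def mexpq (q : ℝ) (M : Matrix (Fin n) (Fin n) ℂ) : Matrix (Fin n) (Fin n) ℂ :=
  matFun (fun s => if q = 1 then Real.exp s else ((q - 1) * s + 1) ^ (1 / (q - 1))) M

/-- Real part of the trace. -/
noncomputable def rtr (A : Matrix (Fin n) (Fin n) ℂ) : ℝ := (Matrix.trace A).re

/-- Scalar deformed logarithm. -/
noncomputable def dlog (q t : ℝ) : ℝ := if q = 1 then Real.log t else (t ^ (q - 1) - 1) / (q - 1)

/-!
For `q ≥ 2` Bernoulli's inequality `t ^ (q - 1) ≥ 1 + (q - 1) (t - 1)`, applied to `t = y / x`,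
gives the scalar inequality `y ≤ x - x ^ (2 - q) (log_q x - log_q y)` for all `x, y > 0`.
Writing `X` and `Y` in their eigenbases `(uᵢ)` and `(vⱼ)`, every trace `Tr (f X · g Y)` becomes
`∑ᵢⱼ |⟨uᵢ, vⱼ⟩|² f(λᵢ) g(νⱼ)`, and the weights `|⟨uᵢ, vⱼ⟩|²` form a doubly stochastic matrix.
Averaging the scalar inequality at `(λᵢ, νⱼ)` against these weights (Klein's argument) yields the
matrix inequality; at `X = Y` the correction term vanishes.
-/

open Finset

section Unistochastic

variable {ι : Type*} [Fintype ι] [DecidableEq ι]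

lemma normSq_mem_doublyStochastic {U : Matrix ι ι ℂ} (hU : U ∈ unitaryGroup ι ℂ) :
    (of fun i j => Complex.normSq (U i j)) ∈ doublyStochastic ℝ ι := by
  have diag_re (M : Matrix ι ι ℂ) (hM : M = 1) (k : ι) : (M k k).re = 1 := by simp [hM]
  refine mem_doublyStochastic_iff_sum.mpr ⟨fun _ _ => Complex.normSq_nonneg _, fun i => ?_,
    fun j => ?_⟩
  · rw [← diag_re _ (mem_unitaryGroup_iff.mp hU) i]
    simp [mul_apply, Complex.re_sum, Complex.mul_conj]
  · rw [← diag_re _ (mem_unitaryGroup_iff'.mp hU) j]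
    simp [mul_apply, Complex.re_sum, mul_comm _ (U _ j), Complex.mul_conj]

lemma re_trace_star_mul_diagonal_mul_mul_diagonal (W : Matrix ι ι ℂ) (d e : ι → ℝ) :
    (trace (star W * diagonal (fun i => (d i : ℂ)) * W * diagonal (fun j => (e j : ℂ)))).re =
      ∑ i, ∑ j, Complex.normSq (W i j) * (d i * e j) := by
  rw [trace, Complex.re_sum, Finset.sum_comm]
  refine sum_congr rfl fun j _ => ?_
  rw [diag_apply, mul_diagonal, mul_apply, Finset.sum_mul, Complex.re_sum]
  refine sum_congr rfl fun i _ => ?_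
  rw [mul_diagonal, star_apply, Complex.star_def, ← Complex.ofReal_re (_ * _)]
  congr 1
  push_cast
  rw [← Complex.mul_conj]
  ring

end Unistochastic

section FunctionalCalculus

variable {A B : Matrix (Fin n) (Fin n) ℂ}

lemma matFun_of_isHermitian (f : ℝ → ℝ) (hA : A.IsHermitian) :
    matFun f A = (hA.eigenvectorUnitary : Matrix (Fin n) (Fin n) ℂ) *
      diagonal (fun i => (f (hA.eigenvalues i) : ℂ)) *
      (star hA.eigenvectorUnitary : Matrix (Fin n) (Fin n) ℂ) :=
  dif_pos hA

lemma matFun_id (hA : A.IsHermitian) : matFun (fun t => t) A = A :=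
  (matFun_of_isHermitian _ hA).trans hA.spectral_theorem.symm

lemma matFun_mul_matFun (f g : ℝ → ℝ) (hA : A.IsHermitian) :
    matFun f A * matFun g A = matFun (fun t => f t * g t) A := by
  simp only [matFun_of_isHermitian _ hA, Matrix.mul_assoc]
  rw [← Matrix.mul_assoc (star _ : Matrix _ _ ℂ), UnitaryGroup.star_mul_self, Matrix.one_mul,
    ← Matrix.mul_assoc (diagonal _), diagonal_mul_diagonal]
  simp

lemma rtr_matFun (f : ℝ → ℝ) (hA : A.IsHermitian) :
    rtr (matFun f A) = ∑ i, f (hA.eigenvalues i) := by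
  rw [rtr, matFun_of_isHermitian f hA, trace_mul_cycle, UnitaryGroup.star_mul_self,
    Matrix.one_mul, trace_diagonal, Complex.re_sum]
  simp

lemma rtr_sub (A B : Matrix (Fin n) (Fin n) ℂ) : rtr (A - B) = rtr A - rtr B := by
  simp [rtr, trace_sub]

lemma rtr_matFun_sub (f g : ℝ → ℝ) (hA : A.IsHermitian) :
    rtr (matFun (fun t => f t - g t) A) = rtr (matFun f A) - rtr (matFun g A) := by
  simp only [rtr_matFun _ hA, sum_sub_distrib]

noncomputable def eigenOverlap (hA : A.IsHermitian) (hB : B.IsHermitian) :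
    Matrix (Fin n) (Fin n) ℝ :=
  of fun i j => Complex.normSq (((star hA.eigenvectorUnitary * hB.eigenvectorUnitary :
    unitaryGroup (Fin n) ℂ) : Matrix (Fin n) (Fin n) ℂ) i j)

lemma eigenOverlap_mem_doublyStochastic (hA : A.IsHermitian) (hB : B.IsHermitian) :
    eigenOverlap hA hB ∈ doublyStochastic ℝ (Fin n) :=
  normSq_mem_doublyStochastic (star hA.eigenvectorUnitary * hB.eigenvectorUnitary).2

lemma rtr_matFun_mul_matFun (f g : ℝ → ℝ) (hA : A.IsHermitian) (hB : B.IsHermitian) :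
    rtr (matFun f A * matFun g B) =
      ∑ i, ∑ j, eigenOverlap hA hB i j * (f (hA.eigenvalues i) * g (hB.eigenvalues j)) := by
  set U : Matrix (Fin n) (Fin n) ℂ := ↑hA.eigenvectorUnitary
  set V : Matrix (Fin n) (Fin n) ℂ := ↑hB.eigenvectorUnitary
  set Df := diagonal fun i => (f (hA.eigenvalues i) : ℂ)
  set Dg := diagonal fun j => (g (hB.eigenvalues j) : ℂ)
  have hprod : matFun f A * matFun g B = U * Df * (star U * V) * Dg * star V := by
    simp only [matFun_of_isHermitian _ hA, matFun_of_isHermitian _ hB, U, V, Df, Dg,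
      Matrix.mul_assoc]
  simp only [eigenOverlap, of_apply, Submonoid.coe_mul, Unitary.coe_star]
  rw [← re_trace_star_mul_diagonal_mul_mul_diagonal, rtr, hprod, trace_mul_comm]
  simp only [star_mul, star_star, Matrix.mul_assoc]
  rfl

theorem rtr_matFun_le_of_eigenvalues (f₁ f₂ g₁ g₂ : ℝ → ℝ) (hA : A.IsHermitian)
    (hB : B.IsHermitian) (h : ∀ i j, g₁ (hB.eigenvalues j) ≤
      f₁ (hA.eigenvalues i) + f₂ (hA.eigenvalues i) * g₂ (hB.eigenvalues j)) :
    rtr (matFun g₁ B) ≤ rtr (matFun f₁ A) + rtr (matFun f₂ A * matFun g₂ B) := by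
  have hw := eigenOverlap_mem_doublyStochastic hA hB
  rw [rtr_matFun _ hA, rtr_matFun _ hB, rtr_matFun_mul_matFun _ _ hA hB]
  calc ∑ j, g₁ (hB.eigenvalues j)
      = ∑ i, ∑ j, eigenOverlap hA hB i j * g₁ (hB.eigenvalues j) := by
        rw [Finset.sum_comm]
        refine sum_congr rfl fun j _ => ?_
        rw [← Finset.sum_mul, sum_col_of_mem_doublyStochastic hw, one_mul]
    _ ≤ ∑ i, ∑ j, eigenOverlap hA hB i j *
          (f₁ (hA.eigenvalues i) + f₂ (hA.eigenvalues i) * g₂ (hB.eigenvalues j)) :=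
        sum_le_sum fun i _ => sum_le_sum fun j _ =>
          mul_le_mul_of_nonneg_left (h i j) (nonneg_of_mem_doublyStochastic hw)
    _ = ∑ i, f₁ (hA.eigenvalues i) +
          ∑ i, ∑ j, eigenOverlap hA hB i j * (f₂ (hA.eigenvalues i) * g₂ (hB.eigenvalues j)) := by
        simp_rw [mul_add, sum_add_distrib, ← Finset.sum_mul, sum_row_of_mem_doublyStochastic hw,
          one_mul]

end FunctionalCalculus

lemma le_sub_rpow_mul_dlog_sub_dlog {q x y : ℝ} (hq : 2 ≤ q) (hx : 0 < x) (hy : 0 < y) :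
    y ≤ x - x ^ (2 - q) * (dlog q x - dlog q y) := by
  have hp : 0 < q - 1 := by linarith
  have bernoulli : 1 + (q - 1) * (y / x - 1) ≤ (y / x) ^ (q - 1) := by
    simpa using one_add_mul_self_le_rpow_one_add
      (by linarith [div_pos hy hx] : (-1 : ℝ) ≤ y / x - 1) (by linarith : (1 : ℝ) ≤ q - 1)
  have hxx : x ^ (2 - q) * x ^ (q - 1) = x := by rw [← Real.rpow_add hx]; norm_num
  have hpow : x * (y / x) ^ (q - 1) = x ^ (2 - q) * y ^ (q - 1) := by
    rw [Real.div_rpow hy.le hx.le, show 2 - q = 1 - (q - 1) by ring, Real.rpow_sub hx 1 (q - 1),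
      Real.rpow_one, mul_div_assoc', div_mul_eq_mul_div]
  have hmain : x + (q - 1) * (y - x) ≤ x ^ (2 - q) * y ^ (q - 1) :=
    calc x + (q - 1) * (y - x) = x * (1 + (q - 1) * (y / x - 1)) := by field_simp
      _ ≤ x * (y / x) ^ (q - 1) := mul_le_mul_of_nonneg_left bernoulli hx.le
      _ = x ^ (2 - q) * y ^ (q - 1) := hpow
  rw [dlog, dlog, if_neg (by linarith), if_neg (by linarith), ← sub_nonneg]
  have hgap : x - x ^ (2 - q) * ((x ^ (q - 1) - 1) / (q - 1) - (y ^ (q - 1) - 1) / (q - 1)) - y =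
      (x ^ (2 - q) * y ^ (q - 1) - (x + (q - 1) * (y - x))) / (q - 1) := by
    field_simp
    linear_combination (-1) * hxx
  rw [hgap]
  exact div_nonneg (by linarith) hp.le

theorem trace_variational_min {n : ℕ} (q : ℝ) (hq : 2 < q)
    (Y : Matrix (Fin n) (Fin n) ℂ) (hY : Y.PosDef) :
    (∀ X : Matrix (Fin n) (Fin n) ℂ, X.PosDef →
      rtr Y ≤ rtr X - rtr (mpow X (2 - q) * (mlogq q X - mlogq q Y))) ∧
    rtr Y - rtr (mpow Y (2 - q) * (mlogq q Y - mlogq q Y)) = rtr Y := by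
  refine ⟨fun X hX => ?_, by simp [rtr]⟩
  have klein := rtr_matFun_le_of_eigenvalues (fun t => t - t ^ (2 - q) * dlog q t)
    (fun t => t ^ (2 - q)) (fun t => t) (dlog q) hX.1 hY.1 fun i j => by
      have := le_sub_rpow_mul_dlog_sub_dlog hq.le (hX.eigenvalues_pos i) (hY.eigenvalues_pos j)
      linarith
  rw [matFun_id hY.1, rtr_matFun_sub _ _ hX.1, matFun_id hX.1, ← matFun_mul_matFun _ _ hX.1]
    at klein
  change _ ≤ _ - rtr (matFun _ X * (matFun (dlog q) X - matFun (dlog q) Y))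
  rw [Matrix.mul_sub, rtr_sub]
  linarith
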